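/- arXiv:1901.10568 — 2 statements merged into one kernel-verified Lean document; each statement's English description precedes it below -/
import Mathlib

section
/- Marginalization preserves log-concavity: if f(x, y) is a jointly log-concave function on ℝ^{m+n}, then g(x) = ∫ f(x, y) dy is log-concave on ℝ^m. In particular, in a state space model with jointly log-concave transition and emission densities, the marginal likelihood of future observations given the current state, x_t ↦ p(y_{≥t} | x_t), is log-concave. -/
/-!
Work with `ℝ≥0∞`-valued log-concave functions and lower Lebesgue integrals, so that no
integrability is needed until the very end. Integrating out one real variable is the
one-dimensional Prékopa–Leindler inequality; integrating out `ℝⁿ` follows by Tonelli, one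
coordinate at a time.

For Prékopa–Leindler on `ℝ`, the superlevel sets of the log-concave `H` are intervals, so
Brunn–Minkowski reduces to `λ |A| + (1 - λ) |B| ≤ |C|` via diameters. After truncating `F` and `G`
and normalizing them to supremum `1`, all levels `t < 1` are attained, and the layer-cake formula
gives `λ ∫F + (1 - λ) ∫G ≤ ∫H`; weighted AM–GM turns this into `(∫F)^λ (∫G)^(1-λ) ≤ ∫H`.
Finally, integrability of the sections makes the marginal finite, so it equals the real integral.
-/

open MeasureTheory

/-- A nonnegative function on a real vector space is log-concave if
`f(λa + (1−λ)b) ≥ f(a)^λ f(b)^{1−λ}` for all `a, b` and `λ ∈ [0,1]`. -/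
def LogConcaveOn {E : Type*} [AddCommGroup E] [Module ℝ E] (f : E → ℝ) : Prop :=
  (∀ x, 0 ≤ f x) ∧
    ∀ (a b : E) (lam : ℝ), 0 ≤ lam → lam ≤ 1 →
      f (lam • a + (1 - lam) • b) ≥ f a ^ lam * f b ^ (1 - lam)

open Set
open scoped ENNReal

namespace ENNReal

theorem rpow_mul_rpow_one_sub_self (c : ℝ≥0∞) {lam : ℝ} (h0 : 0 ≤ lam) (h1 : lam ≤ 1) :
    c ^ lam * c ^ (1 - lam) = c := by
  rw [← ENNReal.rpow_add_of_nonneg _ _ h0 (sub_nonneg.2 h1), add_sub_cancel, ENNReal.rpow_one]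

theorem le_rpow_mul_rpow_one_sub {c a b : ℝ≥0∞} {lam : ℝ} (h0 : 0 ≤ lam) (h1 : lam ≤ 1)
    (ha : c ≤ a) (hb : c ≤ b) : c ≤ a ^ lam * b ^ (1 - lam) := by
  calc c = c ^ lam * c ^ (1 - lam) := (rpow_mul_rpow_one_sub_self c h0 h1).symm
    _ ≤ a ^ lam * b ^ (1 - lam) := by gcongr

theorem rpow_mul_rpow_one_sub_le_add {a b : ℝ≥0∞} {lam : ℝ} (h0 : 0 < lam) (h1 : lam < 1) :
    a ^ lam * b ^ (1 - lam) ≤ ENNReal.ofReal lam * a + ENNReal.ofReal (1 - lam) * b := by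
  have h0' : 0 < 1 - lam := sub_pos.2 h1
  have := young_inequality (a ^ lam) (b ^ (1 - lam)) (.inv_one_sub_inv h0 h1)
  rwa [← rpow_mul, ← rpow_mul, mul_inv_cancel₀ h0.ne', mul_inv_cancel₀ h0'.ne', rpow_one,
    rpow_one, ofReal_inv_of_pos h0, ofReal_inv_of_pos h0', div_eq_mul_inv, div_eq_mul_inv,
    inv_inv, inv_inv, mul_comm a, mul_comm b] at this

theorem iSup_min_natCast (x : ℝ≥0∞) : ⨆ n : ℕ, min x n = x := by
  rw [← inf_iSup_eq, ENNReal.iSup_natCast, inf_top_eq]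

end ENNReal

theorem Real.brunnMinkowski_of_ordConnected {A B C : Set ℝ} (hA : A.Nonempty) (hB : B.Nonempty)
    (hC : C.OrdConnected) {lam : ℝ} (h0 : 0 ≤ lam) (h1 : lam ≤ 1)
    (hABC : ∀ s ∈ A, ∀ u ∈ B, lam * s + (1 - lam) * u ∈ C) :
    ENNReal.ofReal lam * volume A + ENNReal.ofReal (1 - lam) * volume B ≤ volume C := by
  grw [Real.volume_le_diam A, Real.volume_le_diam B]
  simp only [Metric.ediam, ENNReal.mul_iSup]
  refine ENNReal.biSup_add_biSup_le hA hB fun x hx y hy =>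
    ENNReal.biSup_add_biSup_le hA hB fun x' hx' y' hy' => ?_
  wlog hxx : x ≤ x' generalizing x x'
  · rw [edist_comm]; exact this x' hx' x hx (le_of_not_ge hxx)
  wlog hyy : y ≤ y' generalizing y y'
  · rw [edist_comm y]; exact this y' hy' y hy (le_of_not_ge hyy)
  calc ENNReal.ofReal lam * edist x x' + ENNReal.ofReal (1 - lam) * edist y y'
      = volume (Icc (lam * x + (1 - lam) * y) (lam * x' + (1 - lam) * y')) := by
        rw [Real.volume_Icc, edist_dist, edist_dist, Real.dist_eq, Real.dist_eq, abs_sub_comm,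
          abs_of_nonneg (sub_nonneg.2 hxx), abs_sub_comm, abs_of_nonneg (sub_nonneg.2 hyy),
          ← ENNReal.ofReal_mul h0, ← ENNReal.ofReal_mul (sub_nonneg.2 h1),
          ← ENNReal.ofReal_add (by nlinarith) (by nlinarith)]
        ring_nf
    _ ≤ volume C := measure_mono (hC.out (hABC x hx y hy) (hABC x' hx' y' hy'))

theorem MeasureTheory.lintegral_eq_lintegral_meas_ofReal_le {α : Type*} [MeasurableSpace α]
    (μ : Measure α) {F : α → ℝ≥0∞} (hF : AEMeasurable F μ) :
    ∫⁻ x, F x ∂μ = ∫⁻ t in Ioi 0, μ {x | ENNReal.ofReal t ≤ F x} := by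
  by_cases htop : μ {x | F x = ∞} = 0
  · have hfin : ∀ᵐ x ∂μ, F x ≠ ∞ := measure_eq_zero_iff_ae_notMem.1 htop
    calc ∫⁻ x, F x ∂μ = ∫⁻ x, ENNReal.ofReal (F x).toReal ∂μ :=
          lintegral_congr_ae (hfin.mono fun x hx => (ENNReal.ofReal_toReal hx).symm)
      _ = ∫⁻ t in Ioi 0, μ {x | t ≤ (F x).toReal} :=
          lintegral_eq_lintegral_meas_le μ (ae_of_all _ fun _ => ENNReal.toReal_nonneg)
            hF.ennreal_toReal
      _ = ∫⁻ t in Ioi 0, μ {x | ENNReal.ofReal t ≤ F x} := by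
          refine lintegral_congr fun t => measure_congr <| hfin.mono fun x hx => ?_
          exact propext (ENNReal.ofReal_le_iff_le_toReal hx).symm
  · have hsub : ∀ t : ℝ, {x | F x = ∞} ⊆ {x | ENNReal.ofReal t ≤ F x} := fun t x hx => by
      simp [hx.out]
    refine (lintegral_eq_top_of_measure_eq_top_ne_zero hF htop).trans (top_unique ?_).symm
    calc ∞ = ∫⁻ _ in Ioi (0 : ℝ), μ {x | F x = ∞} := by simp [htop]
      _ ≤ _ := lintegral_mono fun t => measure_mono (hsub t)

def IsLogConcave {E : Type*} [AddCommGroup E] [Module ℝ E] (F : E → ℝ≥0∞) : Prop :=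
  ∀ (a b : E) (lam : ℝ), 0 < lam → lam < 1 →
    F a ^ lam * F b ^ (1 - lam) ≤ F (lam • a + (1 - lam) • b)

namespace IsLogConcave

variable {E : Type*} [AddCommGroup E] [Module ℝ E] {F : E → ℝ≥0∞}

theorem comp_affineMap {V : Type*} [AddCommGroup V] [Module ℝ V] (hF : IsLogConcave F)
    (g : V →ᵃ[ℝ] E) : IsLogConcave (F ∘ g) := by
  intro a b lam h0 h1
  simpa only [Function.comp, Convex.combo_affine_apply (add_sub_cancel lam 1)]
    using hF (g a) (g b) lam h0 h1

theorem comp_linearMap {V : Type*} [AddCommGroup V] [Module ℝ V] (hF : IsLogConcave F)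
    (g : V →ₗ[ℝ] E) : IsLogConcave (F ∘ g) :=
  hF.comp_affineMap g.toAffineMap

theorem comp_prodMk {V : Type*} [AddCommGroup V] [Module ℝ V] {F : E × V → ℝ≥0∞}
    (hF : IsLogConcave F) (x : E) : IsLogConcave fun y => F (x, y) :=
  hF.comp_affineMap ((AffineMap.const ℝ V x).prod (LinearMap.id.toAffineMap))

theorem const_mul (hF : IsLogConcave F) (c : ℝ≥0∞) : IsLogConcave fun x => c * F x := by
  intro a b lam h0 h1
  calc (c * F a) ^ lam * (c * F b) ^ (1 - lam)
      = (c ^ lam * c ^ (1 - lam)) * (F a ^ lam * F b ^ (1 - lam)) := by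
        rw [ENNReal.mul_rpow_of_nonneg _ _ h0.le, ENNReal.mul_rpow_of_nonneg _ _ (by linarith)]
        ring
    _ ≤ c * F (lam • a + (1 - lam) • b) := by
        rw [ENNReal.rpow_mul_rpow_one_sub_self c h0.le h1.le]
        gcongr
        exact hF a b lam h0 h1

theorem min_const (hF : IsLogConcave F) (c : ℝ≥0∞) : IsLogConcave fun x => min (F x) c := by
  intro a b lam h0 h1
  refine le_min ?_ ?_
  · exact le_trans (by gcongr <;> exact min_le_left _ _) (hF a b lam h0 h1)
  · calc min (F a) c ^ lam * min (F b) c ^ (1 - lam) ≤ c ^ lam * c ^ (1 - lam) := by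
          gcongr <;> exact min_le_right _ _
      _ = c := ENNReal.rpow_mul_rpow_one_sub_self c h0.le h1.le

theorem convex_setOf_le (hF : IsLogConcave F) (c : ℝ≥0∞) : Convex ℝ {x | c ≤ F x} := by
  refine convex_iff_forall_pos.2 fun x hx y hy a b ha hb hab => ?_
  obtain rfl : b = 1 - a := by linarith
  exact (ENNReal.le_rpow_mul_rpow_one_sub ha.le (by linarith) hx hy).trans
    (hF x y a ha (by linarith))

theorem aemeasurable {V : Type*} [NormedAddCommGroup V] [NormedSpace ℝ V] [MeasurableSpace V]
    [BorelSpace V] [FiniteDimensional ℝ V] {F : V → ℝ≥0∞} (hF : IsLogConcave F) (μ : Measure V)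
    [μ.IsAddHaarMeasure] : AEMeasurable F μ :=
  NullMeasurable.aemeasurable <| measurable_of_Ici fun c =>
    (hF.convex_setOf_le c).nullMeasurableSet μ

theorem add_lintegral_le_of_iSup_eq_one {F G H : ℝ → ℝ≥0∞} (hF : AEMeasurable F)
    (hG : AEMeasurable G) (hH : IsLogConcave H) (hF1 : ⨆ s, F s = 1) (hG1 : ⨆ u, G u = 1)
    {lam : ℝ} (h0 : 0 ≤ lam) (h1 : lam ≤ 1)
    (hFGH : ∀ s u, F s ^ lam * G u ^ (1 - lam) ≤ H (lam * s + (1 - lam) * u)) :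
    ENNReal.ofReal lam * (∫⁻ s, F s) + ENNReal.ofReal (1 - lam) * (∫⁻ u, G u) ≤ ∫⁻ x, H x := by
  have hlevel : ∀ t : ℝ, t ≠ 1 →
      ENNReal.ofReal lam * volume {s | ENNReal.ofReal t ≤ F s} +
        ENNReal.ofReal (1 - lam) * volume {u | ENNReal.ofReal t ≤ G u} ≤
      volume {x | ENNReal.ofReal t ≤ H x} := by
    -- At `t = 1` a superlevel set of `F` or `G` may be empty, but a single level is null.
    intro t ht
    rcases ht.lt_or_gt with ht | ht
    · have hlt : ENNReal.ofReal t < 1 := ENNReal.ofReal_lt_one.2 ht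
      obtain ⟨s, hs⟩ := lt_iSup_iff.1 (hF1 ▸ hlt)
      obtain ⟨u, hu⟩ := lt_iSup_iff.1 (hG1 ▸ hlt)
      refine Real.brunnMinkowski_of_ordConnected ⟨s, hs.le⟩ ⟨u, hu.le⟩
        ((hH.convex_setOf_le _).ordConnected) h0 h1 fun s hs u hu => ?_
      exact (ENNReal.le_rpow_mul_rpow_one_sub h0 h1 hs hu).trans (hFGH s u)
    · have hempty : ∀ K : ℝ → ℝ≥0∞, ⨆ s, K s = 1 → {s | ENNReal.ofReal t ≤ K s} = ∅ :=
        fun K hK => eq_empty_of_forall_notMem fun s hs =>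
          (hK ▸ le_iSup K s).not_gt (ENNReal.one_lt_ofReal.2 ht |>.trans_le hs)
      simp [hempty F hF1, hempty G hG1]
  have hmeas : ∀ K : ℝ → ℝ≥0∞, Measurable fun t : ℝ => volume {s | ENNReal.ofReal t ≤ K s} :=
    fun K => Antitone.measurable fun t t' htt' =>
      measure_mono fun s hs => (ENNReal.ofReal_le_ofReal htt').trans hs
  have hne : ∀ᵐ t : ℝ ∂volume.restrict (Ioi 0), t ≠ 1 :=
    ae_restrict_of_ae (by simp [ae_iff, measure_singleton])
  rw [lintegral_eq_lintegral_meas_ofReal_le _ hF, lintegral_eq_lintegral_meas_ofReal_le _ hG,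
    lintegral_eq_lintegral_meas_ofReal_le _ (hH.aemeasurable volume),
    ← lintegral_const_mul _ (hmeas F), ← lintegral_const_mul _ (hmeas G),
    ← lintegral_add_left ((hmeas F).const_mul _)]
  exact lintegral_mono_ae (hne.mono hlevel)

theorem prekopaLeindler_of_iSup_ne_top {F G H : ℝ → ℝ≥0∞} (hF : AEMeasurable F)
    (hG : AEMeasurable G) (hH : IsLogConcave H) (hFtop : ⨆ s, F s ≠ ∞) (hGtop : ⨆ u, G u ≠ ∞)
    {lam : ℝ} (h0 : 0 < lam) (h1 : lam < 1)
    (hFGH : ∀ s u, F s ^ lam * G u ^ (1 - lam) ≤ H (lam * s + (1 - lam) * u)) :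
    (∫⁻ s, F s) ^ lam * (∫⁻ u, G u) ^ (1 - lam) ≤ ∫⁻ x, H x := by
  have h1' : 0 < 1 - lam := sub_pos.2 h1
  set a := ⨆ s, F s
  set b := ⨆ u, G u
  rcases eq_or_ne a 0 with ha | ha
  · simp [ENNReal.iSup_eq_zero.1 ha, ENNReal.zero_rpow_of_pos h0]
  rcases eq_or_ne b 0 with hb | hb
  · simp [ENNReal.iSup_eq_zero.1 hb, ENNReal.zero_rpow_of_pos h1']
  set c := a⁻¹ ^ lam * b⁻¹ ^ (1 - lam)
  have hc0 : c ≠ 0 := mul_ne_zero (by simp [hFtop, h0.le]) (by simp [hGtop, h1.le])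
  have hctop : c ≠ ∞ := ENNReal.mul_ne_top (by simp [ha, h0.le]) (by simp [hb, h1.le])
  have hscale : ∀ x y : ℝ≥0∞, (a⁻¹ * x) ^ lam * (b⁻¹ * y) ^ (1 - lam) =
      c * (x ^ lam * y ^ (1 - lam)) := fun x y => by
    rw [ENNReal.mul_rpow_of_nonneg _ _ h0.le, ENNReal.mul_rpow_of_nonneg _ _ h1'.le]; ring
  have hnorm : ∀ K : ℝ → ℝ≥0∞, ⨆ s, K s ≠ 0 → ⨆ s, K s ≠ ∞ → ⨆ s, (⨆ s, K s)⁻¹ * K s = 1 :=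
    fun K hK0 hKtop => by rw [← ENNReal.mul_iSup, ENNReal.inv_mul_cancel hK0 hKtop]
  have hnormalized := add_lintegral_le_of_iSup_eq_one (hF.const_mul a⁻¹)
    (hG.const_mul b⁻¹) (hH.const_mul c) (hnorm F ha hFtop) (hnorm G hb hGtop) h0.le h1.le
    fun s u => (hscale _ _).trans_le (by gcongr; exact hFGH s u)
  rw [lintegral_const_mul'' _ hF, lintegral_const_mul'' _ hG,
    lintegral_const_mul'' _ (hH.aemeasurable volume)] at hnormalized
  rw [← ENNReal.mul_le_mul_iff_right hc0 hctop, ← hscale]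
  exact (ENNReal.rpow_mul_rpow_one_sub_le_add h0 h1).trans hnormalized

theorem prekopaLeindler {F G H : ℝ → ℝ≥0∞} (hF : AEMeasurable F)
    (hG : AEMeasurable G) (hH : IsLogConcave H) {lam : ℝ} (h0 : 0 < lam) (h1 : lam < 1)
    (hFGH : ∀ s u, F s ^ lam * G u ^ (1 - lam) ≤ H (lam * s + (1 - lam) * u)) :
    (∫⁻ s, F s) ^ lam * (∫⁻ u, G u) ^ (1 - lam) ≤ ∫⁻ x, H x := by
  have h1' : 0 < 1 - lam := sub_pos.2 h1
  have htrunc : ∀ K : ℝ → ℝ≥0∞, AEMeasurable K → ∫⁻ s, K s = ⨆ n : ℕ, ∫⁻ s, min (K s) n :=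
    fun K hK => by
      rw [← lintegral_iSup' (fun n => hK.min aemeasurable_const)
        (ae_of_all _ fun s n m hnm => min_le_min_left _ (Nat.cast_le.2 hnm))]
      simp only [ENNReal.iSup_min_natCast]
  have hbounded : ∀ (K : ℝ → ℝ≥0∞) (n : ℕ), ⨆ s, min (K s) n ≠ ∞ := fun K n =>
    ne_top_of_le_ne_top (ENNReal.natCast_ne_top n) (iSup_le fun s => min_le_right _ _)
  rw [htrunc F hF, htrunc G hG, ← ENNReal.orderIsoRpow_apply lam h0, OrderIso.map_iSup,
    ← ENNReal.orderIsoRpow_apply _ h1', OrderIso.map_iSup, ENNReal.iSup_mul]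
  refine iSup_le fun i => ?_
  rw [ENNReal.mul_iSup]
  refine iSup_le fun j => ?_
  refine prekopaLeindler_of_iSup_ne_top (hF.min aemeasurable_const)
    (hG.min aemeasurable_const) hH (hbounded F i) (hbounded G j) h0 h1 fun s u => ?_
  exact le_trans (by gcongr <;> exact min_le_left _ _) (hFGH s u)

theorem lintegral_snd_real {F : E × ℝ → ℝ≥0∞} (hF : IsLogConcave F) :
    IsLogConcave fun x => ∫⁻ t, F (x, t) := by
  intro a b lam h0 h1
  refine prekopaLeindler ((hF.comp_prodMk a).aemeasurable volume)
    ((hF.comp_prodMk b).aemeasurable volume) (hF.comp_prodMk _) h0 h1 fun s u => ?_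
  simpa using hF (a, s) (b, u) lam h0 h1

theorem lintegral_snd_pi :
    ∀ {n : ℕ} {F : E × (Fin n → ℝ) → ℝ≥0∞}, IsLogConcave F →
      IsLogConcave fun x => ∫⁻ y, F (x, y)
  | 0, F, hF => by
    have hconst : ∀ x, ∫⁻ y, F (x, y) = F (x, 0) := fun x => by
      rw [lintegral_unique, volume_pi, Measure.pi_univ, Finset.univ_eq_empty, Finset.prod_empty,
        mul_one]
      congr 2
      exact Subsingleton.elim _ _
    rw [show (fun x => ∫⁻ y, F (x, y)) = F ∘ LinearMap.inl ℝ E _ from funext hconst]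
    exact hF.comp_linearMap _
  | n + 1, F, hF => by
    let L := Fin.consLinearEquiv ℝ fun _ : Fin (n + 1) => ℝ
    let e := MeasurableEquiv.piFinSuccAbove (fun _ : Fin (n + 1) => ℝ) 0
    have he : ⇑e.symm = ⇑L := funext fun z => Fin.insertNth_zero' z.1 z.2
    have hsplit : ∀ x, ∫⁻ y, F (x, y) = ∫⁻ y', ∫⁻ t, F (x, L (t, y')) := fun x => by
      rw [← (volume_preserving_piFinSuccAbove (fun _ : Fin (n + 1) => ℝ) 0).symm.lintegral_comp_emb
        e.symm.measurableEmbedding, he]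
      exact lintegral_prod_symm _
        (((hF.comp_prodMk x).comp_linearMap L.toLinearMap).aemeasurable (volume.prod volume))
    have hG : IsLogConcave fun q : (E × (Fin n → ℝ)) × ℝ => F (q.1.1, L (q.2, q.1.2)) :=
      hF.comp_linearMap ((LinearMap.fst ℝ E _ ∘ₗ LinearMap.fst ℝ _ ℝ).prod
        (L.toLinearMap ∘ₗ (LinearMap.snd ℝ _ ℝ).prod (LinearMap.snd ℝ E _ ∘ₗ LinearMap.fst ℝ _ ℝ)))
    simpa only [hsplit] using lintegral_snd_pi hG.lintegral_snd_real

theorem lintegral_snd_euclideanSpace {n : ℕ} {F : E × EuclideanSpace ℝ (Fin n) → ℝ≥0∞}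
    (hF : IsLogConcave F) : IsLogConcave fun x => ∫⁻ y, F (x, y) := by
  have hpi := (hF.comp_linearMap (LinearMap.id.prodMap
    (WithLp.linearEquiv 2 ℝ (Fin n → ℝ)).symm.toLinearMap)).lintegral_snd_pi
  have hchange : ∀ x, ∫⁻ y, F (x, y) = ∫⁻ y : Fin n → ℝ, F (x, WithLp.toLp 2 y) := fun x =>
    ((PiLp.volume_preserving_toLp (Fin n)).lintegral_comp_emb
      (MeasurableEquiv.toLp 2 _).measurableEmbedding _).symm
  simp only [hchange]
  exact hpi

theorem logConcaveOn_toReal {F : E → ℝ≥0∞} (hF : IsLogConcave F) (hfin : ∀ x, F x ≠ ∞) :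
    LogConcaveOn fun x => (F x).toReal := by
  refine ⟨fun x => ENNReal.toReal_nonneg, fun a b lam h0 h1 => ?_⟩
  rcases h0.eq_or_lt with rfl | h0
  · simp
  rcases h1.eq_or_lt with rfl | h1
  · simp
  dsimp only
  rw [ENNReal.toReal_rpow, ENNReal.toReal_rpow, ← ENNReal.toReal_mul]
  exact ENNReal.toReal_mono (hfin _) (hF a b lam h0 h1)

end IsLogConcave

theorem LogConcaveOn.isLogConcave_ofReal {E : Type*} [AddCommGroup E] [Module ℝ E] {f : E → ℝ}
    (hf : LogConcaveOn f) : IsLogConcave fun x => ENNReal.ofReal (f x) := by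
  intro a b lam h0 h1
  dsimp only
  rw [ENNReal.ofReal_rpow_of_nonneg (hf.1 a) h0.le,
    ENNReal.ofReal_rpow_of_nonneg (hf.1 b) (sub_pos.2 h1).le,
    ← ENNReal.ofReal_mul (Real.rpow_nonneg (hf.1 a) _)]
  exact ENNReal.ofReal_le_ofReal (hf.2 a b lam h0.le h1.le)

/-- Marginalization preserves log-concavity: if `f(x, y)` is jointly log-concave on
`ℝ^{m+n}`, then `g(x) = ∫ f(x, y) dy` is log-concave on `ℝ^m`. -/
theorem logConcave_marginal {m n : ℕ}
    (f : EuclideanSpace ℝ (Fin m) × EuclideanSpace ℝ (Fin n) → ℝ)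
    (hf : LogConcaveOn f)
    (hint : ∀ x : EuclideanSpace ℝ (Fin m), Integrable (fun y => f (x, y)) volume) :
    LogConcaveOn (fun x : EuclideanSpace ℝ (Fin m) => ∫ y, f (x, y)) := by
  have hfin : ∀ x, ∫⁻ y, ENNReal.ofReal (f (x, y)) ≠ ∞ := fun x =>
    (hint x).lintegral_lt_top.ne
  have heq : ∀ x, ∫ y, f (x, y) = (∫⁻ y, ENNReal.ofReal (f (x, y))).toReal := fun x =>
    integral_eq_lintegral_of_nonneg_ae (ae_of_all _ fun y => hf.1 _) (hint x).aestronglyMeasurable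
  have hmarginal := hf.isLogConcave_ofReal.lintegral_snd_euclideanSpace
  simpa only [heq] using hmarginal.logConcaveOn_toReal hfin
end

section
/- For the stochastic volatility model with transition N(x_t | φ x_{t−1}, σ²), log-concave Gaussian-scale emissions, and stationary prior N(0, σ²/(1−φ²)) with |φ| < 1, the Lipschitz constant of the prior transition kernel is |φ|, and consequently the forward and backward smoothing kernels have Wasserstein Lipschitz constant at most |φ|. In particular the smoothing kernels are strict Wasserstein contractions when |φ| < 1. -/
open MeasureTheory ProbabilityTheory

/-- The `p`-Wasserstein distance, defined as an infimum over couplings. -/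
noncomputable def wassersteinP {E : Type*} [NormedAddCommGroup E] [MeasurableSpace E]
    (p : ℝ) (μ ν : Measure E) : ℝ :=
  sInf { c | ∃ π : Measure (E × E), IsProbabilityMeasure π ∧
      π.map Prod.fst = μ ∧ π.map Prod.snd = ν ∧
      c = (∫ z, ‖z.1 - z.2‖ ^ p ∂π) ^ (1 / p) }

/-!
Coupling `x` with `x + c` shows that translating a probability measure by `c` moves it by at
most `‖c‖` in `W_p`, while every coupling of `μ` and `ν` costs at least the distance between their
means (move the norm inside the integral, then Jensen for `t ↦ t ^ p`). As `N(m, v)` is `N(0, v)`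
translated by `m`, the prior kernel satisfies `W_p(N(φx, σ²), N(φx', σ²)) = |φ| |x - x'|`, and the
Lipschitz kernel bound applied with `L = |φ|` gives the bound for both smoothing kernels.
-/

theorem wassersteinP_le_of_coupling {E : Type*} [NormedAddCommGroup E] [MeasurableSpace E]
    {p : ℝ} {μ ν : Measure E} (π : Measure (E × E)) [IsProbabilityMeasure π]
    (hfst : π.map Prod.fst = μ) (hsnd : π.map Prod.snd = ν) :
    wassersteinP p μ ν ≤ (∫ z, ‖z.1 - z.2‖ ^ p ∂π) ^ (1 / p) :=
  csInf_le ⟨0, by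
    rintro c ⟨π, -, -, -, rfl⟩
    exact Real.rpow_nonneg (integral_nonneg fun z ↦ Real.rpow_nonneg (norm_nonneg _) p) _⟩
    ⟨π, inferInstance, hfst, hsnd, rfl⟩

theorem wassersteinP_map_add_const_le {E : Type*} [NormedAddCommGroup E] [MeasurableSpace E]
    [BorelSpace E] [SecondCountableTopology E] {p : ℝ} (hp : p ≠ 0)
    (μ : Measure E) [IsProbabilityMeasure μ] (c : E) :
    wassersteinP p μ (μ.map (· + c)) ≤ ‖c‖ := by
  have hshift : Measurable fun x : E ↦ (x, x + c) := by fun_prop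
  have hcost : Measurable fun z : E × E ↦ ‖z.1 - z.2‖ ^ p := by fun_prop
  have : IsProbabilityMeasure (μ.map fun x ↦ (x, x + c)) :=
    Measure.isProbabilityMeasure_map hshift.aemeasurable
  calc wassersteinP p μ (μ.map (· + c))
      ≤ (∫ z, ‖z.1 - z.2‖ ^ p ∂(μ.map fun x ↦ (x, x + c))) ^ (1 / p) :=
        wassersteinP_le_of_coupling _
          (by rw [Measure.map_map measurable_fst hshift]; exact Measure.map_id)
          (by rw [Measure.map_map measurable_snd hshift]; rfl)
    _ = ‖c‖ := by
        rw [integral_map hshift.aemeasurable hcost.aestronglyMeasurable]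
        simp [← Real.rpow_mul (norm_nonneg c), hp]

theorem integral_norm_le_rpow_integral_norm_rpow {α E : Type*} [MeasurableSpace α]
    [NormedAddCommGroup E] {π : Measure α} [IsProbabilityMeasure π] {p : ℝ} (hp : 1 ≤ p)
    {f : α → E} (hf : MemLp f (ENNReal.ofReal p) π) :
    ∫ a, ‖f a‖ ∂π ≤ (∫ a, ‖f a‖ ^ p ∂π) ^ (1 / p) := by
  have hp0 : 0 < p := by linarith
  have hjensen : (∫ a, ‖f a‖ ∂π) ^ p ≤ ∫ a, ‖f a‖ ^ p ∂π :=
    (convexOn_rpow hp).map_integral_le (continuousOn_id.rpow_const fun _ _ ↦ Or.inr hp0.le)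
      isClosed_Ici (ae_of_all _ fun a ↦ norm_nonneg (f a))
      (hf.integrable (by simpa using hp)).norm
      (by simpa [Function.comp_def, ENNReal.toReal_ofReal hp0.le] using
        hf.integrable_norm_rpow (by simpa using hp0) ENNReal.ofReal_ne_top)
  calc ∫ a, ‖f a‖ ∂π = ((∫ a, ‖f a‖ ∂π) ^ p) ^ (1 / p) := by
        rw [← Real.rpow_mul (integral_nonneg fun a ↦ norm_nonneg (f a)), mul_one_div_cancel hp0.ne',
          Real.rpow_one]
    _ ≤ (∫ a, ‖f a‖ ^ p ∂π) ^ (1 / p) := by gcongr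

theorem norm_integral_sub_integral_le_wassersteinP {E : Type*} [NormedAddCommGroup E]
    [NormedSpace ℝ E] [CompleteSpace E] [MeasurableSpace E] [BorelSpace E]
    [SecondCountableTopology E] {p : ℝ} (hp : 1 ≤ p) {μ ν : Measure E}
    [IsProbabilityMeasure μ] [IsProbabilityMeasure ν]
    (hμ : MemLp id (ENNReal.ofReal p) μ) (hν : MemLp id (ENNReal.ofReal p) ν) :
    ‖∫ x, x ∂μ - ∫ x, x ∂ν‖ ≤ wassersteinP p μ ν := by
  refine le_csInf ⟨_, μ.prod ν, inferInstance, by simp, by simp, rfl⟩ ?_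
  rintro c ⟨π, hπ, rfl, rfl, rfl⟩
  have hfst : MemLp Prod.fst (ENNReal.ofReal p) π :=
    (memLp_map_measure_iff aestronglyMeasurable_id measurable_fst.aemeasurable).1 hμ
  have hsnd : MemLp Prod.snd (ENNReal.ofReal p) π :=
    (memLp_map_measure_iff aestronglyMeasurable_id measurable_snd.aemeasurable).1 hν
  have hp1 : 1 ≤ ENNReal.ofReal p := by simpa using hp
  calc ‖∫ x, x ∂(π.map Prod.fst) - ∫ x, x ∂(π.map Prod.snd)‖
      = ‖∫ z, (z.1 - z.2) ∂π‖ := by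
        rw [integral_map (f := fun x : E ↦ x) measurable_fst.aemeasurable aestronglyMeasurable_id,
          integral_map (f := fun x : E ↦ x) measurable_snd.aemeasurable aestronglyMeasurable_id,
          integral_sub (hfst.integrable hp1) (hsnd.integrable hp1)]
    _ ≤ ∫ z, ‖z.1 - z.2‖ ∂π := norm_integral_le_integral_norm _
    _ ≤ (∫ z, ‖z.1 - z.2‖ ^ p ∂π) ^ (1 / p) :=
        integral_norm_le_rpow_integral_norm_rpow hp (hfst.sub hsnd)

theorem wassersteinP_gaussianReal_gaussianReal {p : ℝ} (hp : 1 ≤ p) (m₁ m₂ : ℝ) (v : NNReal) :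
    wassersteinP p (gaussianReal m₁ v) (gaussianReal m₂ v) = |m₁ - m₂| := by
  refine le_antisymm ?_ ?_
  · have hshift : (gaussianReal m₁ v).map (· + (m₂ - m₁)) = gaussianReal m₂ v := by
      rw [gaussianReal_map_add_const, add_sub_cancel]
    simpa [hshift, abs_sub_comm] using
      wassersteinP_map_add_const_le (by linarith) (gaussianReal m₁ v) (m₂ - m₁)
  · simpa using norm_integral_sub_integral_le_wassersteinP hp
      (memLp_id_gaussianReal' (μ := m₁) (v := v) _ ENNReal.ofReal_ne_top)
      (memLp_id_gaussianReal' (μ := m₂) (v := v) _ ENNReal.ofReal_ne_top)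

theorem svm_smoothing_kernels_contraction_general (σ : NNReal)
    (φ : ℝ) (hφ : |φ| < 1) (p : ℝ) (hp : 1 ≤ p)
    (Ψf Ψb : ℕ → ℝ → Measure ℝ)
    (hLKB : ∀ L : ℝ, 0 ≤ L →
      (∀ x x' : ℝ, wassersteinP p (gaussianReal (φ * x) (σ ^ 2))
          (gaussianReal (φ * x') (σ ^ 2)) ≤ L * |x - x'|) →
      ∀ (t : ℕ) (x x' : ℝ),
        wassersteinP p (Ψf t x) (Ψf t x') ≤ L * |x - x'| ∧
        wassersteinP p (Ψb t x) (Ψb t x') ≤ L * |x - x'|) :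
    (∀ x x' : ℝ, wassersteinP p (gaussianReal (φ * x) (σ ^ 2))
        (gaussianReal (φ * x') (σ ^ 2)) = |φ| * |x - x'|) ∧
    (∀ (t : ℕ) (x x' : ℝ),
        wassersteinP p (Ψf t x) (Ψf t x') ≤ |φ| * |x - x'| ∧
        wassersteinP p (Ψb t x) (Ψb t x') ≤ |φ| * |x - x'|) ∧
    |φ| < 1 := by
  have hprior (x x' : ℝ) : wassersteinP p (gaussianReal (φ * x) (σ ^ 2))
      (gaussianReal (φ * x') (σ ^ 2)) = |φ| * |x - x'| := by
    rw [wassersteinP_gaussianReal_gaussianReal hp, ← mul_sub, abs_mul]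
  exact ⟨hprior, hLKB |φ| (abs_nonneg φ) fun x x' ↦ (hprior x x').le, hφ⟩

/-- For the stochastic volatility model with transition `N(x_t | φ x_{t-1}, σ²)`, stationary
prior `N(0, σ²/(1-φ²))`, `|φ| < 1`, and log-concave emissions, the prior transition kernel has
Wasserstein Lipschitz constant `|φ|`; hence, by the Lipschitz Kernel Bound for log-concave
state space models (taken as the hypothesis `hLKB`), the forward and backward smoothing
kernels `Ψf, Ψb` have Wasserstein Lipschitz constant at most `|φ|`, and are strict
contractions since `|φ| < 1`. -/
theorem svm_smoothing_kernels_contraction (σ : NNReal) (hσ : 0 < σ)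
    (φ : ℝ) (hφ : |φ| < 1) (p : ℝ) (hp : 1 ≤ p)
    (Ψf Ψb : ℕ → ℝ → Measure ℝ)
    (hLKB : ∀ L : ℝ, 0 ≤ L →
      (∀ x x' : ℝ, wassersteinP p (gaussianReal (φ * x) (σ ^ 2))
          (gaussianReal (φ * x') (σ ^ 2)) ≤ L * |x - x'|) →
      ∀ (t : ℕ) (x x' : ℝ),
        wassersteinP p (Ψf t x) (Ψf t x') ≤ L * |x - x'| ∧
        wassersteinP p (Ψb t x) (Ψb t x') ≤ L * |x - x'|) :
    (∀ x x' : ℝ, wassersteinP p (gaussianReal (φ * x) (σ ^ 2))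
        (gaussianReal (φ * x') (σ ^ 2)) = |φ| * |x - x'|) ∧
    (∀ (t : ℕ) (x x' : ℝ),
        wassersteinP p (Ψf t x) (Ψf t x') ≤ |φ| * |x - x'| ∧
        wassersteinP p (Ψb t x) (Ψb t x') ≤ |φ| * |x - x'|) ∧
    |φ| < 1 :=
  svm_smoothing_kernels_contraction_general σ φ hφ p hp Ψf Ψb hLKB
end
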